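/- Let ξ ∈ ℂ with ξ ∉ {0, 1, -1}, E = ξ + ξ⁻¹, λ ∈ ℝ, ℓ ∈ ℕ. Define M₋₁ = [[1, -λ],[0,1]], M₀ = Y(E)^ℓ where Y(E) = [[E,-1],[1,0]], and M₁ = M₋₁ M₀. Then (1/2) tr M₁ = (ξ^ℓ + ξ^{-ℓ})/2 - (λ/2)·(ξ^ℓ - ξ^{-ℓ})/(ξ - ξ⁻¹). -/
import Mathlib


open Matrix

private lemma D_ne (ξ : ℂ) (hξ0 : ξ ≠ 0) (hξ1 : ξ ≠ 1) (hξm1 : ξ ≠ -1) :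
    ξ - ξ⁻¹ ≠ 0 := by
  intro h
  have h2 : ξ ^ 2 = 1 := by
    field_simp at h
    linear_combination h
  have h3 : (ξ - 1) * (ξ + 1) = 0 := by linear_combination h2
  rcases mul_eq_zero.mp h3 with h | h
  · exact hξ1 (by linear_combination h)
  · exact hξm1 (by linear_combination h)

private lemma pow_formula (ξ : ℂ) (hξ0 : ξ ≠ 0) (hξ1 : ξ ≠ 1) (hξm1 : ξ ≠ -1)
    (E : ℂ) (hE : E = ξ + ξ⁻¹) (ℓ : ℕ) :
    (!![E, -1; 1, 0] : Matrix (Fin 2) (Fin 2) ℂ) ^ ℓ =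
      !![(ξ ^ (ℓ+1) - ξ⁻¹ ^ (ℓ+1)) / (ξ - ξ⁻¹), -((ξ ^ ℓ - ξ⁻¹ ^ ℓ) / (ξ - ξ⁻¹));
         (ξ ^ ℓ - ξ⁻¹ ^ ℓ) / (ξ - ξ⁻¹),
         (ξ ^ (ℓ+1) - ξ⁻¹ ^ (ℓ+1)) / (ξ - ξ⁻¹) - E * ((ξ ^ ℓ - ξ⁻¹ ^ ℓ) / (ξ - ξ⁻¹))] := by
  set s : ℕ → ℂ := fun n => (ξ ^ n - ξ⁻¹ ^ n) / (ξ - ξ⁻¹) with hs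
  have hD := D_ne ξ hξ0 hξ1 hξm1
  have hinv : ξ * ξ⁻¹ = 1 := mul_inv_cancel₀ hξ0
  have hmul : ∀ n : ℕ, s n * (ξ - ξ⁻¹) = ξ ^ n - ξ⁻¹ ^ n := fun n =>
    div_mul_cancel₀ _ hD
  have hrec : ∀ n : ℕ, s (n + 2) = E * s (n + 1) - s n := by
    intro n
    apply mul_right_cancel₀ hD
    rw [hE]
    linear_combination hmul (n+2) - (ξ + ξ⁻¹) * hmul (n+1) + hmul n +
      (ξ⁻¹ ^ n - ξ ^ n) * hinv
  show _ = !![s (ℓ+1), -(s ℓ); s ℓ, s (ℓ+1) - E * s ℓ]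
  induction ℓ with
  | zero =>
    simp only [pow_zero]
    have h1 : s 1 = 1 := by simp [hs, pow_one, div_self hD]
    have h0 : s 0 = 0 := by simp [hs]
    rw [h1, h0]
    ext i j
    fin_cases i <;> fin_cases j <;> simp [Matrix.one_apply]
  | succ n ih =>
    rw [pow_succ, ih]
    ext i j
    fin_cases i <;> fin_cases j <;>
      simp [Matrix.mul_apply, Fin.sum_univ_two, hrec n] <;> ring

/-- Half-trace of `M₁ = [[1,-λ],[0,1]] · Y(E)^ℓ`:
`(1/2) tr M₁ = (ξ^ℓ + ξ^{-ℓ})/2 - (λ/2)(ξ^ℓ - ξ^{-ℓ})/(ξ - ξ⁻¹)`. -/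
theorem halftrace_M1 (ξ : ℂ) (hξ0 : ξ ≠ 0) (hξ1 : ξ ≠ 1) (hξm1 : ξ ≠ -1)
    (E : ℂ) (hE : E = ξ + ξ⁻¹) (lam : ℝ) (ℓ : ℕ) :
    (1 / 2 : ℂ) * ((!![1, -(lam : ℂ); 0, 1] * (!![E, -1; 1, 0]) ^ ℓ)).trace =
      (ξ ^ ℓ + ξ⁻¹ ^ ℓ) / 2 - ((lam : ℂ) / 2) * (ξ ^ ℓ - ξ⁻¹ ^ ℓ) / (ξ - ξ⁻¹) := by
  have hD := D_ne ξ hξ0 hξ1 hξm1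
  have hinv : ξ * ξ⁻¹ = 1 := mul_inv_cancel₀ hξ0
  set s : ℕ → ℂ := fun n => (ξ ^ n - ξ⁻¹ ^ n) / (ξ - ξ⁻¹) with hs
  have hmul : ∀ n : ℕ, s n * (ξ - ξ⁻¹) = ξ ^ n - ξ⁻¹ ^ n := fun n =>
    div_mul_cancel₀ _ hD
  have htr : 2 * s (ℓ+1) - E * s ℓ = ξ ^ ℓ + ξ⁻¹ ^ ℓ := by
    apply mul_right_cancel₀ hD
    rw [hE]
    linear_combination 2 * hmul (ℓ+1) - (ξ + ξ⁻¹) * hmul ℓ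
  rw [pow_formula ξ hξ0 hξ1 hξm1 E hE ℓ]
  show (1 / 2 : ℂ) * ((!![1, -(lam : ℂ); 0, 1] *
      !![s (ℓ+1), -(s ℓ); s ℓ, s (ℓ+1) - E * s ℓ])).trace = _
  rw [Matrix.trace_fin_two]
  simp [Matrix.mul_apply, Fin.sum_univ_two, -inv_pow]
  rw [mul_div_assoc]
  show _ = (ξ ^ ℓ + ξ⁻¹ ^ ℓ) / 2 - (lam : ℂ) / 2 * s ℓ
  linear_combination (1 / 2 : ℂ) * htr
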